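/- Let A_n(θ,φ,q) = e^{-inφ} · (-q^{(1-n)/2} e^{i(θ+φ)}, -q^{(1-n)/2} e^{i(-θ+φ)}; q)_n. Then for every integer n ≥ 2, every real q > 0, and all real θ, φ, with x = cos θ and y = cos φ, one has A_n(θ,φ,q) = 4·t_{n-1}(x,y,q) · A_{n-2}(θ,φ,q). -/
import Mathlib


/-- The `q`-Pochhammer symbol `(a;q)_n` with complex `a` and real `q`. -/
noncomputable def qPochC (a : ℂ) (q : ℝ) (n : ℕ) : ℂ := ∏ i ∈ Finset.range n, (1 - a * (q : ℂ) ^ i)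

/-- `A_n(θ,φ,q) = e^{-inφ}·(-q^{(1-n)/2}e^{i(θ+φ)}, -q^{(1-n)/2}e^{i(-θ+φ)}; q)_n`. -/
noncomputable def Afun (q θ φ : ℝ) (n : ℕ) : ℂ :=
  Complex.exp (-(n : ℂ) * Complex.I * (φ : ℂ)) *
    qPochC (-((q ^ ((1 - (n : ℝ)) / 2) : ℝ) : ℂ) * Complex.exp (Complex.I * ((θ + φ : ℝ) : ℂ))) q n *
    qPochC (-((q ^ ((1 - (n : ℝ)) / 2) : ℝ) : ℂ) * Complex.exp (Complex.I * ((-θ + φ : ℝ) : ℂ))) q n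

/-- `t_n(x,y,q)`: `t_0 = x + y` and for `n ≥ 1`,
`t_n = x² + y² + xy(q^{n/2} + q^{-n/2}) + (q^n + q^{-n} - 2)/4`. -/
noncomputable def tfun (q x y : ℝ) (n : ℕ) : ℝ :=
  if n = 0 then x + y
  else x ^ 2 + y ^ 2 + x * y * (q ^ ((n : ℝ) / 2) + q ^ (-(n : ℝ) / 2))
    + (q ^ (n : ℝ) + q ^ (-(n : ℝ)) - 2) / 4

/-- The key scalar identity. -/
lemma key_identity (c u v : ℂ) (hc : c ≠ 0) (hu : u ≠ 0) (hv : v ≠ 0) :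
    (v⁻¹)^2 * ((1 + c⁻¹ * (u * v)) * (1 + c * (u * v))) *
      ((1 + c⁻¹ * (u⁻¹ * v)) * (1 + c * (u⁻¹ * v)))
    = 4 * (((u + u⁻¹)/2)^2 + ((v + v⁻¹)/2)^2
        + ((u + u⁻¹)/2) * ((v + v⁻¹)/2) * (c + c⁻¹) + (c^2 + (c⁻¹)^2 - 2)/4) := by
  have hdc : c * c⁻¹ = 1 := mul_inv_cancel₀ hc
  have hdu : u * u⁻¹ = 1 := mul_inv_cancel₀ hu
  have hdv : v * v⁻¹ = 1 := mul_inv_cancel₀ hv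
  generalize c⁻¹ = d at *
  generalize u⁻¹ = s at *
  generalize v⁻¹ = t at *
  linear_combination
    (s^2*v^2*t^2 + 2*u*s*v^2*t^2 + u^2*v^2*t^2 + u^2*s^2*v^4*t^2 + d*u*s^2*v^3*t^2
      + d*u^2*s*v^3*t^2 + c*u*s^2*v^3*t^2 + c*u^2*s*v^3*t^2 + c*d*u^2*s^2*v^4*t^2) * hdc
    + (-2 + 2*v^2*t^2 + v^4*t^2 + u*s*v^4*t^2 + d*s*v^3*t^2 + d*u*v^3*t^2 + d^2*v^2*t^2
      + c*s*v^3*t^2 + c*u*v^3*t^2 + c^2*v^2*t^2) * hdu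
    + (2*v*t + v^2 + v^3*t + s^2 + s^2*v*t + u^2 + u^2*v*t + d*s*t + d*s*v + d*s*v^2*t
      + d*u*t + d*u*v + d*u*v^2*t + d^2 + d^2*v*t + c*s*t + c*s*v + c*s*v^2*t
      + c*u*t + c*u*v + c*u*v^2*t + c^2 + c^2*v*t) * hdv

/-- Splitting off the first and last factor of the `q`-Pochhammer symbol. -/
lemma poch_split (q : ℝ) (hq : 0 < q) (m : ℕ) (E : ℂ) :
    qPochC (-((q ^ ((1 - ((m + 2 : ℕ) : ℝ)) / 2) : ℝ) : ℂ) * E) q (m + 2)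
      = ((1 + ((q ^ (-(((m : ℝ) + 1) / 2)) : ℝ) : ℂ) * E) *
          (1 + ((q ^ (((m : ℝ) + 1) / 2) : ℝ) : ℂ) * E)) *
        qPochC (-((q ^ ((1 - (m : ℝ)) / 2) : ℝ) : ℂ) * E) q m := by
  unfold qPochC
  rw [Finset.prod_range_succ, Finset.prod_range_succ']
  have h0 : (1 - (-((q ^ ((1 - ((m + 2 : ℕ) : ℝ)) / 2) : ℝ) : ℂ) * E) * (q : ℂ) ^ (0 : ℕ))
      = 1 + ((q ^ (-(((m : ℝ) + 1) / 2)) : ℝ) : ℂ) * E := by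
    have hx : ((q ^ ((1 - ((m + 2 : ℕ) : ℝ)) / 2) : ℝ) : ℂ)
        = ((q ^ (-(((m : ℝ) + 1) / 2)) : ℝ) : ℂ) := by
      congr 2
      push_cast
      ring
    linear_combination E * hx
  have hlast : (1 - (-((q ^ ((1 - ((m + 2 : ℕ) : ℝ)) / 2) : ℝ) : ℂ) * E) * (q : ℂ) ^ (m + 1))
      = 1 + ((q ^ (((m : ℝ) + 1) / 2) : ℝ) : ℂ) * E := by
    have hx : ((q ^ ((1 - ((m + 2 : ℕ) : ℝ)) / 2) : ℝ) : ℂ) * (q : ℂ) ^ (m + 1)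
        = ((q ^ (((m : ℝ) + 1) / 2) : ℝ) : ℂ) := by
      push_cast
      rw [← Complex.ofReal_pow, ← Complex.ofReal_mul]
      congr 1
      rw [← Real.rpow_natCast q (m + 1), ← Real.rpow_add hq]
      congr 1
      push_cast
      ring
    linear_combination E * hx
  have hmid : ∀ i ∈ Finset.range m,
      (1 - (-((q ^ ((1 - ((m + 2 : ℕ) : ℝ)) / 2) : ℝ) : ℂ) * E) * (q : ℂ) ^ (i + 1))
        = 1 - (-((q ^ ((1 - (m : ℝ)) / 2) : ℝ) : ℂ) * E) * (q : ℂ) ^ i := by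
    intro i _
    have hx : ((q ^ ((1 - ((m + 2 : ℕ) : ℝ)) / 2) : ℝ) : ℂ) * (q : ℂ) ^ (i + 1)
        = ((q ^ ((1 - (m : ℝ)) / 2) : ℝ) : ℂ) * (q : ℂ) ^ i := by
      rw [← Complex.ofReal_pow, ← Complex.ofReal_pow, ← Complex.ofReal_mul,
        ← Complex.ofReal_mul]
      congr 1
      rw [← Real.rpow_natCast q (i + 1), ← Real.rpow_natCast q i,
        ← Real.rpow_add hq, ← Real.rpow_add hq]
      congr 1
      push_cast
      ring
    linear_combination E * hx
  rw [Finset.prod_congr rfl hmid, h0, hlast]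
  ring

theorem stmt3 (n : ℕ) (hn : 2 ≤ n) (q : ℝ) (hq0 : 0 < q) (θ φ x y : ℝ)
    (hx : x = Real.cos θ) (hy : y = Real.cos φ) :
    Afun q θ φ n = 4 * ((tfun q x y (n - 1) : ℝ) : ℂ) * Afun q θ φ (n - 2) := by
  obtain ⟨m, rfl⟩ : ∃ m, n = m + 2 := ⟨n - 2, by omega⟩
  have h1 : m + 2 - 1 = m + 1 := by omega
  have h2 : m + 2 - 2 = m := by omega
  rw [h1, h2]
  set u : ℂ := Complex.exp (Complex.I * θ) with hu_def
  set v : ℂ := Complex.exp (Complex.I * φ) with hv_def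
  have hu : u ≠ 0 := Complex.exp_ne_zero _
  have hv : v ≠ 0 := Complex.exp_ne_zero _
  set c : ℝ := q ^ (((m : ℝ) + 1) / 2) with hc_def
  have hcpos : 0 < c := Real.rpow_pos_of_pos hq0 _
  have hc : (c : ℂ) ≠ 0 := by exact_mod_cast hcpos.ne'
  have hE1 : Complex.exp (Complex.I * ((θ + φ : ℝ) : ℂ)) = u * v := by
    rw [hu_def, hv_def, ← Complex.exp_add]
    push_cast
    ring_nf
  have hE2 : Complex.exp (Complex.I * ((-θ + φ : ℝ) : ℂ)) = u⁻¹ * v := by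
    rw [hu_def, hv_def, ← Complex.exp_neg, ← Complex.exp_add]
    push_cast
    ring_nf
  have hcinv : ((q ^ (-(((m : ℝ) + 1) / 2)) : ℝ) : ℂ) = (c : ℂ)⁻¹ := by
    rw [hc_def, ← Complex.ofReal_inv]
    congr 1
    rw [← Real.rpow_neg hq0.le]
  have hexp : Complex.exp (-((m + 2 : ℕ) : ℂ) * Complex.I * (φ : ℂ))
      = (v⁻¹)^2 * Complex.exp (-((m : ℕ) : ℂ) * Complex.I * (φ : ℂ)) := by
    rw [hv_def, ← Complex.exp_neg, ← Complex.exp_nat_mul, ← Complex.exp_add]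
    congr 1
    push_cast
    ring
  have hxu : (x : ℂ) = (u + u⁻¹) / 2 := by
    rw [hx, Complex.ofReal_cos, hu_def, ← Complex.exp_neg, Complex.cos]
    ring_nf
  have hyv : (y : ℂ) = (v + v⁻¹) / 2 := by
    rw [hy, Complex.ofReal_cos, hv_def, ← Complex.exp_neg, Complex.cos]
    ring_nf
  have htf : ((tfun q x y (m + 1) : ℝ) : ℂ)
      = ((x:ℂ)^2 + (y:ℂ)^2 + (x:ℂ)*(y:ℂ)*((c:ℂ) + (c:ℂ)⁻¹)
        + ((c:ℂ)^2 + ((c:ℂ)⁻¹)^2 - 2)/4) := by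
    rw [tfun, if_neg (by omega)]
    have e1 : q ^ (((m + 1 : ℕ) : ℝ) / 2) = c := by
      rw [hc_def]; congr 1; push_cast; ring
    have e2 : q ^ (-((m + 1 : ℕ) : ℝ) / 2) = c⁻¹ := by
      rw [hc_def, ← Real.rpow_neg hq0.le]; congr 1; push_cast; ring
    have e3 : q ^ ((m + 1 : ℕ) : ℝ) = c ^ 2 := by
      rw [hc_def, ← Real.rpow_natCast (q ^ (((m:ℝ)+1)/2)) 2, ← Real.rpow_mul hq0.le]
      congr 1; push_cast; ring
    have e4 : q ^ (-((m + 1 : ℕ) : ℝ)) = (c⁻¹) ^ 2 := by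
      rw [inv_pow, ← e3, ← Real.rpow_neg hq0.le]
    rw [e1, e2, e3, e4]
    push_cast
    ring
  rw [Afun, Afun]
  rw [poch_split q hq0 m _, poch_split q hq0 m _, hE1, hE2, hcinv, hexp, htf, hxu, hyv]
  have hkey := key_identity (c : ℂ) u v hc hu hv
  linear_combination (Complex.exp (-((m : ℕ) : ℂ) * Complex.I * (φ : ℂ)) *
    qPochC (-((q ^ ((1 - (m : ℝ)) / 2) : ℝ) : ℂ) * (u * v)) q m *
    qPochC (-((q ^ ((1 - (m : ℝ)) / 2) : ℝ) : ℂ) * (u⁻¹ * v)) q m) * hkey
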